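/- Let G be a strongly connected signed digraph that is weight balanced, i.e., Σ_j |a_ij| = Σ_j |a_ji| for every i. Then there exists a real number α > 0 such that det(L̄_11) = det(L̄_22) = … = det(L̄_nn) = α, and consequently for every x ∈ ℝⁿ, Φ_e(x) = α·Σ_{i=1}^n Σ_{j=1}^n |a_ij|·(x_i − sgn(a_ij)·x_j)² = α·xᵀ(L + Lᵀ)x. -/

import Mathlib

open Matrix BigOperators Filter

/-- In-degree of node `i`: sum of absolute values of the `i`-th row of `A`. -/
noncomputable def inDeg {n : ℕ} (A : Matrix (Fin n) (Fin n) ℝ) (i : Fin n) : ℝ := ∑ j, |A i j|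

/-- Laplacian `L = Δ − A` of the signed digraph with adjacency matrix `A`. -/
noncomputable def lapOf {n : ℕ} (A : Matrix (Fin n) (Fin n) ℝ) : Matrix (Fin n) (Fin n) ℝ :=
  Matrix.diagonal (inDeg A) - A

/-- Laplacian `L̄ = Δ − Ā` of the induced unsigned digraph. -/
noncomputable def lapBar {n : ℕ} (A : Matrix (Fin n) (Fin n) ℝ) : Matrix (Fin n) (Fin n) ℝ :=
  Matrix.diagonal (inDeg A) - Matrix.of (fun i j => |A i j|)

/-- `det(L̄_ii)`: determinant of `L̄` with its `i`-th row and column removed. -/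
noncomputable def minorDet {n : ℕ} (A : Matrix (Fin n) (Fin n) ℝ) (i : Fin n) : ℝ :=
  Matrix.det ((lapBar A).submatrix (fun k : {j : Fin n // j ≠ i} => (k : Fin n))
    (fun k : {j : Fin n // j ≠ i} => (k : Fin n)))

/-- `W = diag(det(L̄_11), …, det(L̄_nn))`. -/
noncomputable def Wmat {n : ℕ} (A : Matrix (Fin n) (Fin n) ℝ) : Matrix (Fin n) (Fin n) ℝ :=
  Matrix.diagonal (minorDet A)

/-- Mirror adjacency matrix `Â = (W·A + Aᵀ·W)/2`. -/
noncomputable def mirrorAdj {n : ℕ} (A : Matrix (Fin n) (Fin n) ℝ) : Matrix (Fin n) (Fin n) ℝ :=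
  (1/2 : ℝ) • (Wmat A * A + Aᵀ * Wmat A)

/-- Mirror Laplacian `L̂ = (W·L + Lᵀ·W)/2`. -/
noncomputable def mirrorLap {n : ℕ} (A : Matrix (Fin n) (Fin n) ℝ) : Matrix (Fin n) (Fin n) ℝ :=
  (1/2 : ℝ) • (Wmat A * lapOf A + (lapOf A)ᵀ * Wmat A)

/-- `(j, i)` is a directed edge when `a_ij ≠ 0`; strong connectivity: a directed
path between every ordered pair of distinct nodes. -/
def StronglyConnected {n : ℕ} (A : Matrix (Fin n) (Fin n) ℝ) : Prop :=
  ∀ i j : Fin n, i ≠ j → Relation.TransGen (fun u v => A v u ≠ 0) i j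

/-- `σ` is the diagonal of a gauge transformation: each entry is `±1`. -/
def IsGauge {n : ℕ} (σ : Fin n → ℝ) : Prop := ∀ i, σ i = 1 ∨ σ i = -1

/-- Structural balance: there is a gauge transformation `D = diag σ` with all entries
of `D·A·D` (entrywise `σ i * A i j * σ j`) nonnegative. -/
def StructBalanced {n : ℕ} (A : Matrix (Fin n) (Fin n) ℝ) : Prop :=
  ∃ σ : Fin n → ℝ, IsGauge σ ∧ ∀ i j, 0 ≤ σ i * A i j * σ j

/-- Improved Laplacian potential function
`Φ_e(x) = Σ_i Σ_j det(L̄_ii)·|a_ij|·(x_i − sgn(a_ij)·x_j)²`. -/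
noncomputable def PhiE {n : ℕ} (A : Matrix (Fin n) (Fin n) ℝ) (x : Fin n → ℝ) : ℝ :=
  ∑ i, ∑ j, minorDet A i * |A i j| * (x i - Real.sign (A i j) * x j) ^ 2

/-! The unsigned Laplacian `L̄` satisfies a strong maximum principle: if `(L̄ x)_v ≤ 0` wherever
`x` attains its maximum, strong connectivity propagates the maximum to every node. Hence the
kernel of `L̄` consists of constant vectors, and under weight balance (which makes `L̄ᵀ` the
unsigned Laplacian of `Aᵀ`) so does its left kernel. As `L̄ * adj L̄ = adj L̄ * L̄ = 0`, the
columns and rows of `adj L̄` are constant, so its diagonal entries `det L̄_ii` coincide.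
They are positive: the same maximum principle shows that `L̄_ii + t • 1` is nonsingular for
every `t ≥ 0`, and a monic polynomial without roots on `[0, ∞)` is positive at `0`. -/

theorem Matrix.adjugate_apply_self {R : Type*} [CommRing R] {n : ℕ}
    (M : Matrix (Fin n) (Fin n) R) (i : Fin n) :
    M.adjugate i i =
      (M.submatrix (fun k : {j : Fin n // j ≠ i} => (k : Fin n))
        (fun k : {j : Fin n // j ≠ i} => (k : Fin n))).det := by
  obtain _ | m := n
  · exact i.elim0
  rw [adjugate_fin_succ_eq_det_submatrix, Even.neg_one_pow ⟨i, rfl⟩, one_mul,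
    ← det_submatrix_equiv_self (finSuccAboveEquiv i)]
  rfl

theorem Matrix.adjugate_apply_eq_of_mulVec_eq_zero {ι R : Type*} [Fintype ι] [DecidableEq ι]
    [CommRing R] {M : Matrix ι ι R} (hdet : M.det = 0)
    (hker : ∀ x, M *ᵥ x = 0 → ∀ a b, x a = x b) (a b k : ι) :
    M.adjugate a k = M.adjugate b k :=
  hker (fun l => M.adjugate l k) (funext fun m => by
    simpa [mulVec, mul_apply', hdet] using congrFun (congrFun (mul_adjugate M) m) k) a b

theorem Polynomial.Monic.eval_pos_of_forall_ne_zero {p : Polynomial ℝ} (hp : p.Monic) {a : ℝ}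
    (h : ∀ t, a ≤ t → p.eval t ≠ 0) : 0 < p.eval a := by
  refine (h a le_rfl).lt_or_gt.resolve_left fun hneg => ?_
  have hdeg : 0 < p.degree := by
    refine natDegree_pos_iff_degree_pos.1 (Nat.pos_of_ne_zero fun h0 => ?_)
    rw [hp.natDegree_eq_zero.1 h0, eval_one] at hneg
    linarith
  obtain ⟨T, hT, haT⟩ := (((p.tendsto_atTop_of_leadingCoeff_nonneg hdeg
    (by rw [hp.leadingCoeff]; exact zero_le_one)).eventually_gt_atTop 0).and
    (eventually_ge_atTop a)).exists
  obtain ⟨c, hc, hc0⟩ := intermediate_value_Icc haT p.continuous.continuousOn ⟨hneg.le, hT.le⟩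
  exact h c hc.1 hc0

section Laplacian

variable {n : ℕ} {A : Matrix (Fin n) (Fin n) ℝ}

theorem StronglyConnected.transpose (hsc : StronglyConnected A) : StronglyConnected Aᵀ :=
  fun i j hij => (hsc j i hij.symm).swap

variable (A) in
theorem lapBar_mulVec_apply (x : Fin n → ℝ) (i : Fin n) :
    (lapBar A *ᵥ x) i = ∑ j, |A i j| * (x i - x j) := by
  rw [lapBar, sub_mulVec, Pi.sub_apply, mulVec_diagonal, inDeg, Finset.sum_mul]
  simp only [mulVec, dotProduct, of_apply, ← Finset.sum_sub_distrib, mul_sub]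

variable (A) in
theorem det_lapBar [Nonempty (Fin n)] : (lapBar A).det = 0 :=
  exists_mulVec_eq_zero_iff.1 ⟨fun _ => 1, one_ne_zero,
    funext fun i => by simp [lapBar_mulVec_apply]⟩

theorem lapBar_transpose (hwb : ∀ i, ∑ j, |A i j| = ∑ j, |A j i|) :
    lapBar Aᵀ = (lapBar A)ᵀ := by
  ext i j
  by_cases h : i = j
  · subst h
    simp [lapBar, inDeg, hwb]
  · simp [lapBar, h, Ne.symm h]

theorem StronglyConnected.eq_of_lapBar_mulVec_nonpos (hsc : StronglyConnected A)
    {x : Fin n → ℝ} {M : ℝ} (hle : ∀ k, x k ≤ M) (hL : ∀ v, x v = M → (lapBar A *ᵥ x) v ≤ 0)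
    {v : Fin n} (hv : x v = M) (u : Fin n) : x u = M := by
  have hclosed : ∀ w, x w = M → ∀ u, A w u ≠ 0 → x u = M := by
    intro w hw u hu
    have hterm : ∀ k ∈ Finset.univ, 0 ≤ |A w k| * (x w - x k) :=
      fun k _ => mul_nonneg (abs_nonneg _) (by linarith [hle k])
    have hsum : ∑ k, |A w k| * (x w - x k) = 0 :=
      le_antisymm (lapBar_mulVec_apply A x w ▸ hL w hw) (Finset.sum_nonneg hterm)
    rcases mul_eq_zero.1 ((Finset.sum_eq_zero_iff_of_nonneg hterm).1 hsum u (Finset.mem_univ u))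
      with h | h
    · exact absurd (abs_eq_zero.1 h) hu
    · linarith
  rcases eq_or_ne u v with rfl | huv
  · exact hv
  obtain hpath := hsc u v huv
  clear huv
  induction hpath using Relation.TransGen.head_induction_on with
  | single h => exact hclosed _ hv _ h
  | head h _ ih => exact hclosed _ ih _ h

theorem StronglyConnected.eq_of_lapBar_mulVec_eq_zero (hsc : StronglyConnected A)
    {x : Fin n → ℝ} (hx : lapBar A *ᵥ x = 0) (a b : Fin n) : x a = x b := by
  obtain ⟨v, -, hv⟩ := Finset.exists_max_image Finset.univ x ⟨a, Finset.mem_univ a⟩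
  have h := hsc.eq_of_lapBar_mulVec_nonpos (fun k => hv k (Finset.mem_univ k))
    (fun w _ => by simp [hx]) rfl
  rw [h a, h b]

theorem StronglyConnected.minorDet_eq (hsc : StronglyConnected A)
    (hwb : ∀ i, ∑ j, |A i j| = ∑ j, |A j i|) (a b : Fin n) : minorDet A a = minorDet A b := by
  have : Nonempty (Fin n) := ⟨a⟩
  have hcol := adjugate_apply_eq_of_mulVec_eq_zero (det_lapBar A)
    fun _ hx => hsc.eq_of_lapBar_mulVec_eq_zero hx
  have hrow := adjugate_apply_eq_of_mulVec_eq_zero (det_lapBar Aᵀ)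
    fun _ hx => hsc.transpose.eq_of_lapBar_mulVec_eq_zero hx
  rw [lapBar_transpose hwb, ← adjugate_transpose] at hrow
  rw [minorDet, minorDet, ← adjugate_apply_self, ← adjugate_apply_self]
  exact (hcol a b a).trans (hrow a b b)

variable (A) in
noncomputable abbrev lapBarMinor (i : Fin n) :
    Matrix {j : Fin n // j ≠ i} {j : Fin n // j ≠ i} ℝ :=
  (lapBar A).submatrix (fun k => (k : Fin n)) (fun k => (k : Fin n))

theorem StronglyConnected.nonpos_of_lapBarMinor_add_smul_mulVec_eq_zero
    (hsc : StronglyConnected A) {i : Fin n} {t : ℝ} (ht : 0 ≤ t) {y : {j // j ≠ i} → ℝ}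
    (hy : (lapBarMinor A i + t • 1) *ᵥ y = 0) (v : {j // j ≠ i}) : y v ≤ 0 := by
  set x : Fin n → ℝ := fun j => if h : j = i then 0 else y ⟨j, h⟩
  have hxy : ∀ w : {j // j ≠ i}, (lapBar A *ᵥ x) w = -t * y w := by
    intro w
    have hw := congrFun hy w
    rw [add_mulVec, smul_mulVec, one_mulVec] at hw
    have : (lapBar A *ᵥ x) w = (lapBarMinor A i *ᵥ y) w := by
      simp only [mulVec, dotProduct, Fintype.sum_eq_add_sum_subtype_ne _ i, x, dif_pos, mul_zero,
        zero_add]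
      exact Finset.sum_congr rfl fun u _ => by rw [dif_neg u.2]; rfl
    simp only [Pi.add_apply, Pi.smul_apply, smul_eq_mul, Pi.zero_apply] at hw
    linarith
  have hxi : x i = 0 := dif_pos rfl
  by_contra! hv
  obtain ⟨v₀, -, hmax⟩ := Finset.exists_max_image Finset.univ x ⟨i, Finset.mem_univ i⟩
  have hM : 0 < x v₀ := hv.trans_le (by simpa [x, v.2] using hmax v (Finset.mem_univ _))
  have hL : ∀ w, x w = x v₀ → (lapBar A *ᵥ x) w ≤ 0 := by
    intro w hw
    have hwi : w ≠ i := by rintro rfl; linarith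
    have hxw : x w = y ⟨w, hwi⟩ := dif_neg hwi
    rw [hxy ⟨w, hwi⟩, ← hxw, hw]
    nlinarith
  have := hsc.eq_of_lapBar_mulVec_nonpos (fun k => hmax k (Finset.mem_univ k)) hL rfl i
  linarith

theorem StronglyConnected.det_lapBarMinor_add_smul_ne_zero (hsc : StronglyConnected A)
    (i : Fin n) {t : ℝ} (ht : 0 ≤ t) : (lapBarMinor A i + t • 1).det ≠ 0 := by
  intro hdet
  obtain ⟨y, hy0, hy⟩ := exists_mulVec_eq_zero_iff.2 hdet
  have hy' : (lapBarMinor A i + t • 1) *ᵥ -y = 0 := by rw [mulVec_neg, hy, neg_zero]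
  refine hy0 (funext fun v => le_antisymm ?_ ?_)
  · exact hsc.nonpos_of_lapBarMinor_add_smul_mulVec_eq_zero ht hy v
  · simpa using hsc.nonpos_of_lapBarMinor_add_smul_mulVec_eq_zero ht hy' v

theorem StronglyConnected.minorDet_pos (hsc : StronglyConnected A) (i : Fin n) :
    0 < minorDet A i := by
  have heval : ∀ t, (-lapBarMinor A i).charpoly.eval t = (lapBarMinor A i + t • 1).det :=
    fun t => by rw [eval_charpoly, scalar_apply, sub_neg_eq_add, add_comm, smul_one_eq_diagonal]
  have h := (charpoly_monic _).eval_pos_of_forall_ne_zero (a := 0)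
    fun t ht => heval t ▸ hsc.det_lapBarMinor_add_smul_ne_zero i ht
  rwa [heval, zero_smul, add_zero] at h

theorem abs_mul_sub_sign_mul_sq (a u v : ℝ) :
    |a| * (u - Real.sign a * v) ^ 2 = |a| * u ^ 2 + |a| * v ^ 2 - 2 * (a * u * v) := by
  rcases lt_trichotomy a 0 with h | rfl | h
  · rw [Real.sign_of_neg h, abs_of_neg h]; ring
  · simp
  · rw [Real.sign_of_pos h, abs_of_pos h]; ring

variable (A) in
theorem dotProduct_lapOf_mulVec (x : Fin n → ℝ) :
    x ⬝ᵥ (lapOf A *ᵥ x) = ∑ i, inDeg A i * x i ^ 2 - ∑ i, ∑ j, A i j * x i * x j := by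
  rw [lapOf, sub_mulVec, dotProduct_sub]
  simp only [dotProduct, mulVec_diagonal]
  simp only [mulVec, dotProduct, Finset.mul_sum]
  congr 1
  · exact Finset.sum_congr rfl fun i _ => by ring
  · exact Finset.sum_congr rfl fun i _ => Finset.sum_congr rfl fun j _ => by ring

theorem sum_abs_mul_sub_sign_mul_sq (hwb : ∀ i, ∑ j, |A i j| = ∑ j, |A j i|) (x : Fin n → ℝ) :
    ∑ i, ∑ j, |A i j| * (x i - Real.sign (A i j) * x j) ^ 2 =
      x ⬝ᵥ ((lapOf A + (lapOf A)ᵀ) *ᵥ x) := by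
  have hT : x ⬝ᵥ ((lapOf A)ᵀ *ᵥ x) = x ⬝ᵥ (lapOf A *ᵥ x) := by
    rw [dotProduct_mulVec, vecMul_transpose, dotProduct_comm]
  rw [add_mulVec, dotProduct_add, hT, ← two_mul, dotProduct_lapOf_mulVec]
  have hcol : ∑ i, ∑ j, |A i j| * x j ^ 2 = ∑ i, inDeg A i * x i ^ 2 := by
    rw [Finset.sum_comm]
    simp only [inDeg, hwb, Finset.sum_mul]
  simp only [abs_mul_sub_sign_mul_sq, Finset.sum_sub_distrib, Finset.sum_add_distrib, hcol,
    inDeg, Finset.sum_mul, ← Finset.mul_sum]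
  ring

end Laplacian

theorem phiE_weight_balanced_general (n : ℕ) (hn : 2 ≤ n)
    (A : Matrix (Fin n) (Fin n) ℝ)
    (hsc : StronglyConnected A)
    (hwb : ∀ i, ∑ j, |A i j| = ∑ j, |A j i|) :
    ∃ α : ℝ, 0 < α ∧ (∀ i, minorDet A i = α) ∧
      (∀ x : Fin n → ℝ,
        PhiE A x = α * ∑ i, ∑ j, |A i j| * (x i - Real.sign (A i j) * x j) ^ 2) ∧
      (∀ x : Fin n → ℝ,
        PhiE A x = α * (x ⬝ᵥ ((lapOf A + (lapOf A)ᵀ) *ᵥ x))) := by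
  set i₀ : Fin n := ⟨0, by omega⟩
  have hconst : ∀ i, minorDet A i = minorDet A i₀ := fun i => hsc.minorDet_eq hwb i i₀
  have hPhi : ∀ x : Fin n → ℝ, PhiE A x =
      minorDet A i₀ * ∑ i, ∑ j, |A i j| * (x i - Real.sign (A i j) * x j) ^ 2 := fun x => by
    simp only [PhiE, hconst, mul_assoc, Finset.mul_sum]
  exact ⟨minorDet A i₀, hsc.minorDet_pos i₀, hconst, hPhi,
    fun x => by rw [hPhi, sum_abs_mul_sub_sign_mul_sq hwb]⟩

/-- on a strongly connected weight-balanced signed digraph, all the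
minor determinants are equal to some `α > 0`, and `Φ_e(x) = α·xᵀ(L + Lᵀ)x`. -/
theorem phiE_weight_balanced (n : ℕ) (hn : 2 ≤ n)
    (A : Matrix (Fin n) (Fin n) ℝ)
    (hdiag : ∀ i, A i i = 0) (hdigon : ∀ i j, 0 ≤ A i j * A j i)
    (hsc : StronglyConnected A)
    (hwb : ∀ i, ∑ j, |A i j| = ∑ j, |A j i|) :
    ∃ α : ℝ, 0 < α ∧ (∀ i, minorDet A i = α) ∧
      (∀ x : Fin n → ℝ,
        PhiE A x = α * ∑ i, ∑ j, |A i j| * (x i - Real.sign (A i j) * x j) ^ 2) ∧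
      (∀ x : Fin n → ℝ,
        PhiE A x = α * (x ⬝ᵥ ((lapOf A + (lapOf A)ᵀ) *ᵥ x))) :=
  phiE_weight_balanced_general n hn A hsc hwb
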